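/- For every nonzero rational number t and every natural number n, the sum over k from 0 to n of ((-1)^k / (2 * t^k)) * (Q_{k+1} + 2*(t-1) * P_k) equals ((-1)^n / t^n) * P_{n+1}. -/
import Mathlib


def pell : ℕ → ℕ
  | 0 => 0
  | 1 => 1
  | n + 2 => 2 * pell (n + 1) + pell n

def pellLucas : ℕ → ℕ
  | 0 => 2
  | 1 => 2
  | n + 2 => 2 * pellLucas (n + 1) + pellLucas n

lemma pellLucas_eq (m : ℕ) : pellLucas (m + 1) = 2 * pell (m + 1) + 2 * pell m := by
  induction m using Nat.twoStepInduction with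
  | zero => rfl
  | one => rfl
  | more m ih1 ih2 =>
    simp only [pell, pellLucas] at *
    omega

theorem pell_martinjak (t : ℚ) (ht : t ≠ 0) (n : ℕ) :
    ∑ k ∈ Finset.range (n + 1),
        ((-1 : ℚ) ^ k / (2 * t ^ k)) *
          ((pellLucas (k + 1) : ℚ) + 2 * (t - 1) * (pell k : ℚ)) =
      ((-1 : ℚ) ^ n / t ^ n) * (pell (n + 1) : ℚ) := by
  induction n with
  | zero => simp [pell, pellLucas]
  | succ n ih =>
    rw [Finset.sum_range_succ, ih, pellLucas_eq (n + 1)]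
    have h2 : (pell (n + 2) : ℚ) = 2 * pell (n + 1) + pell n := by
      norm_cast
    push_cast [h2]
    field_simp
    ring
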